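/- Assume (D+) and let (V,u) be a weak solution of the Lifshitz–Slyozov system with total mass M and V₀ > d(0). For z ≥ 0 let X(·,z) be the characteristic curve through z and define g(t,z) := ∫₀^∞ (X(t,z) − x)² u(t,x) dx. Then for every z ≥ 0 and every t ≥ 0: g(t,z) ≤ g(0,z) e^{−2αt}. -/

import Mathlib

open Set Filter Topology MeasureTheory

/-- Assumption (D+): `d : [0,∞) → [0,∞)` is C¹ with `0 < α ≤ d'(x) ≤ β` for all `x ≥ 0`. -/
structure DPlus (d d' : ℝ → ℝ) (α β : ℝ) : Prop where
  nonneg : ∀ x ∈ Set.Ici (0:ℝ), 0 ≤ d x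
  hasDeriv : ∀ x ∈ Set.Ici (0:ℝ), HasDerivWithinAt d (d' x) (Set.Ici 0) x
  contDeriv : ContinuousOn d' (Set.Ici 0)
  alpha_pos : 0 < α
  deriv_lb : ∀ x ∈ Set.Ici (0:ℝ), α ≤ d' x
  deriv_ub : ∀ x ∈ Set.Ici (0:ℝ), d' x ≤ β

/-- A C¹ test function `φ` (with derivative `φ'`) on `[0,∞)` satisfying
`|φ(x)| ≤ C(1+x²)` and `|φ'(x)| ≤ C(1+x)` for some constant `C`. -/
def IsTest (φ φ' : ℝ → ℝ) : Prop :=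
  (∀ x ∈ Set.Ici (0:ℝ), HasDerivWithinAt φ (φ' x) (Set.Ici 0) x) ∧
  ContinuousOn φ' (Set.Ici 0) ∧
  ∃ C : ℝ, ∀ x ∈ Set.Ici (0:ℝ), |φ x| ≤ C * (1 + x ^ 2) ∧ |φ' x| ≤ C * (1 + x)

/-- Weak solution of the Lifshitz–Slyozov system with nucleation parameter `ε`
(`ε = 0`: no nucleation; `ε = 1`: nucleation with nucleus size `i0`) and total mass `M`:
`V` is C¹ on `[0,∞)`, `u(t,·) ≥ 0` with `(1+x²)u(t,x)` integrable, mass conservation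
`V(t) + ∫₀^∞ x u(t,x) dx = M` holds, and for every test function `φ`,
`d/dt ∫₀^∞ φ(x)u(t,x)dx = ∫₀^∞ φ'(x)(V(t)−d(x))u(t,x)dx + ε φ(0) V(t)^{i0}`. -/
structure WeakSolLSN (d : ℝ → ℝ) (M ε : ℝ) (i0 : ℕ) (V : ℝ → ℝ) (u : ℝ → ℝ → ℝ) : Prop where
  u_nonneg : ∀ t ∈ Set.Ici (0:ℝ), ∀ x ∈ Set.Ici (0:ℝ), 0 ≤ u t x
  V_contDiff : ContDiffOn ℝ 1 V (Set.Ici 0)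
  u_int : ∀ t ∈ Set.Ici (0:ℝ), IntegrableOn (fun x => (1 + x ^ 2) * u t x) (Set.Ioi 0)
  mass : ∀ t ∈ Set.Ici (0:ℝ), V t + ∫ x in Set.Ioi (0:ℝ), x * u t x = M
  weak : ∀ φ φ' : ℝ → ℝ, IsTest φ φ' → ∀ t ∈ Set.Ici (0:ℝ),
    HasDerivWithinAt (fun s => ∫ x in Set.Ioi (0:ℝ), φ x * u s x)
      ((∫ x in Set.Ioi (0:ℝ), φ' x * (V t - d x) * u t x) + ε * φ 0 * V t ^ i0)
      (Set.Ici 0) t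

/-!
Along a characteristic, the transport by `V` moves `X(t)` and the mass of `u(t)` at the same
speed, so it drops out of `g' = ∫ 2 (X - x) (d x - d X) u dx`; only the difference of growth
rates survives. Since `d' ≥ α`, `d` is strongly monotone, `(X - x) (d x - d X) ≤ -α (X - x)²`,
hence `g' ≤ -2α g`, and Grönwall's inequality gives the decay. The derivative is computed by
expanding `g = X² m₀ - 2 X m₁ + m₂` in the moments of `u`, whose derivatives are given by the
weak formulation with the test functions `1`, `x`, `x²`.
-/

namespace DPlus

variable {d d' : ℝ → ℝ} {α β : ℝ}

theorem hasDerivAt (hD : DPlus d d' α β) {x : ℝ} (hx : 0 < x) : HasDerivAt d (d' x) x :=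
  (hD.hasDeriv x hx.le).hasDerivAt (Ici_mem_nhds hx)

theorem continuousOn (hD : DPlus d d' α β) : ContinuousOn d (Ici 0) :=
  fun x hx => (hD.hasDeriv x hx).continuousWithinAt

theorem differentiableOn_interior (hD : DPlus d d' α β) :
    DifferentiableOn ℝ d (interior (Ici 0)) := by
  rw [interior_Ici]
  exact fun x hx => (hD.hasDerivAt hx).differentiableAt.differentiableWithinAt

theorem beta_pos (hD : DPlus d d' α β) : 0 < β :=
  hD.alpha_pos.trans_le ((hD.deriv_lb 0 self_mem_Ici).trans (hD.deriv_ub 0 self_mem_Ici))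

theorem mul_sub_le_sub (hD : DPlus d d' α β) {x y : ℝ} (hx : 0 ≤ x) (hxy : x ≤ y) :
    α * (y - x) ≤ d y - d x := by
  refine (convex_Ici 0).mul_sub_le_image_sub_of_le_deriv hD.continuousOn
    hD.differentiableOn_interior (fun z hz => ?_) x hx y (hx.trans hxy) hxy
  rw [interior_Ici] at hz
  rw [(hD.hasDerivAt hz).deriv]
  exact hD.deriv_lb z (mem_Ici.2 hz.le)

theorem sub_le_mul_sub (hD : DPlus d d' α β) {x y : ℝ} (hx : 0 ≤ x) (hxy : x ≤ y) :
    d y - d x ≤ β * (y - x) := by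
  refine (convex_Ici 0).image_sub_le_mul_sub_of_deriv_le hD.continuousOn
    hD.differentiableOn_interior (fun z hz => ?_) x hx y (hx.trans hxy) hxy
  rw [interior_Ici] at hz
  rw [(hD.hasDerivAt hz).deriv]
  exact hD.deriv_ub z (mem_Ici.2 hz.le)

theorem mul_sq_le_sub_mul_sub (hD : DPlus d d' α β) {a b : ℝ} (ha : 0 ≤ a) (hb : 0 ≤ b) :
    α * (a - b) ^ 2 ≤ (a - b) * (d a - d b) := by
  rcases le_total b a with hba | hab
  · nlinarith [hD.mul_sub_le_sub hb hba]
  · nlinarith [hD.mul_sub_le_sub ha hab]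

theorem abs_sub_le_mul_abs_sub (hD : DPlus d d' α β) {a b : ℝ} (ha : 0 ≤ a) (hb : 0 ≤ b) :
    |d a - d b| ≤ β * |a - b| := by
  have hα := hD.alpha_pos
  rcases le_total b a with hba | hab
  · have := hD.mul_sub_le_sub hb hba
    rw [abs_of_nonneg (by nlinarith), abs_of_nonneg (sub_nonneg.2 hba)]
    exact hD.sub_le_mul_sub hb hba
  · have := hD.mul_sub_le_sub ha hab
    rw [abs_of_nonpos (by nlinarith), abs_of_nonpos (sub_nonpos.2 hab)]
    linarith [hD.sub_le_mul_sub ha hab]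

theorem abs_sub_le (hD : DPlus d d' α β) (v : ℝ) {x : ℝ} (hx : 0 ≤ x) :
    |v - d x| ≤ (|v - d 0| + β) * (1 + x) := by
  have hlip := hD.abs_sub_le_mul_abs_sub hx le_rfl
  rw [sub_zero, abs_of_nonneg hx] at hlip
  have htri := _root_.abs_sub_le v (d 0) (d x)
  rw [abs_sub_comm (d 0)] at htri
  nlinarith [abs_nonneg (v - d 0), hD.beta_pos]

end DPlus

theorem isTest_one : IsTest (fun _ => 1) (fun _ => 0) :=
  ⟨fun _ _ => hasDerivWithinAt_const _ _ _, continuousOn_const, 1, fun x (hx : 0 ≤ x) => by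
    constructor <;> norm_num <;> positivity⟩

theorem isTest_id : IsTest (fun x => x) (fun _ => 1) :=
  ⟨fun _ _ => hasDerivWithinAt_id _ _, continuousOn_const, 1, fun x (hx : 0 ≤ x) => by
    rw [abs_of_nonneg hx, abs_one]
    constructor <;> nlinarith [sq_nonneg (x - 1)]⟩

theorem isTest_sq : IsTest (fun x => x ^ 2) (fun x => 2 * x) :=
  ⟨fun _ _ => by simpa using hasDerivWithinAt_pow 2 _ (s := _), by fun_prop, 2,
    fun x (hx : 0 ≤ x) => by
    rw [abs_of_nonneg (sq_nonneg x), abs_of_nonneg (by positivity)]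
    constructor <;> nlinarith⟩

theorem integrableOn_mul_of_abs_le {u f : ℝ → ℝ} {C : ℝ}
    (hu : IntegrableOn (fun x => (1 + x ^ 2) * u x) (Ioi 0)) (hf : ContinuousOn f (Ioi 0))
    (hfC : ∀ x ∈ Ioi (0:ℝ), |f x| ≤ C * (1 + x ^ 2)) :
    IntegrableOn (fun x => f x * u x) (Ioi 0) := by
  have hquot : IntegrableOn (fun x => f x / (1 + x ^ 2) * ((1 + x ^ 2) * u x)) (Ioi 0) := by
    refine hu.bdd_mul (c := C)
      ((hf.div (by fun_prop) fun x _ => by positivity).aestronglyMeasurable measurableSet_Ioi)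
      (ae_restrict_of_forall_mem measurableSet_Ioi fun x hx => ?_)
    rw [Real.norm_eq_abs, abs_div, abs_of_pos (by positivity : (0:ℝ) < 1 + x ^ 2)]
    exact (div_le_iff₀ (by positivity)).2 (hfC x hx)
  refine hquot.congr_fun (fun x _ => ?_) measurableSet_Ioi
  field_simp

theorem integrableOn_pow_mul {u : ℝ → ℝ}
    (hu : IntegrableOn (fun x => (1 + x ^ 2) * u x) (Ioi 0)) {k : ℕ} (hk : k ≤ 2) :
    IntegrableOn (fun x => x ^ k * u x) (Ioi 0) :=
  integrableOn_mul_of_abs_le (C := 1) hu (by fun_prop) fun x (hx : 0 < x) => by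
    rw [abs_of_pos (by positivity), one_mul]
    interval_cases k <;> nlinarith [sq_nonneg (x - 1)]

theorem integral_sq_sub_mul {u : ℝ → ℝ}
    (hu : IntegrableOn (fun x => (1 + x ^ 2) * u x) (Ioi 0)) (c : ℝ) :
    ∫ x in Ioi (0:ℝ), (c - x) ^ 2 * u x =
      c ^ 2 * (∫ x in Ioi (0:ℝ), u x) - 2 * c * (∫ x in Ioi (0:ℝ), x * u x)
        + ∫ x in Ioi (0:ℝ), x ^ 2 * u x := by
  have h0 : IntegrableOn u (Ioi 0) := by simpa using integrableOn_pow_mul hu (k := 0) (by norm_num)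
  have h1 : IntegrableOn (fun x => x * u x) (Ioi 0) := by
    simpa using integrableOn_pow_mul hu (k := 1) (by norm_num)
  have h2 := integrableOn_pow_mul hu (k := 2) le_rfl
  calc ∫ x in Ioi (0:ℝ), (c - x) ^ 2 * u x
      = ∫ x in Ioi (0:ℝ), (c ^ 2 * u x - 2 * c * (x * u x) + x ^ 2 * u x) := by
        congr 1; funext x; ring
    _ = _ := by
        rw [integral_add (Integrable.sub' (h0.const_mul _) (h1.const_mul _)) h2,
          integral_sub (h0.const_mul _) (h1.const_mul _), integral_const_mul, integral_const_mul]

theorem DPlus.integral_mul_sub_le_neg_mul_integral_sq {d d' : ℝ → ℝ} {α β : ℝ}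
    (hD : DPlus d d' α β) {u : ℝ → ℝ}
    (hu_nonneg : ∀ x ∈ Ioi (0:ℝ), 0 ≤ u x)
    (hu : IntegrableOn (fun x => (1 + x ^ 2) * u x) (Ioi 0)) {c : ℝ} (hc : 0 ≤ c) :
    ∫ x in Ioi (0:ℝ), 2 * (c - x) * (d x - d c) * u x ≤
      -2 * α * ∫ x in Ioi (0:ℝ), (c - x) ^ 2 * u x := by
  have hsq : ∀ x, (c - x) ^ 2 ≤ 2 * (1 + c ^ 2) * (1 + x ^ 2) := fun x => by
    nlinarith [sq_nonneg (c + x), sq_nonneg (c * x)]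
  have hdC : ContinuousOn d (Ioi 0) := hD.continuousOn.mono Ioi_subset_Ici_self
  have hint_sq : IntegrableOn (fun x => (c - x) ^ 2 * u x) (Ioi 0) :=
    integrableOn_mul_of_abs_le hu (by fun_prop) fun x _ => by
      rw [abs_of_nonneg (sq_nonneg _)]; exact hsq x
  have hint : IntegrableOn (fun x => 2 * (c - x) * (d x - d c) * u x) (Ioi 0) := by
    refine integrableOn_mul_of_abs_le (C := 2 * β * (2 * (1 + c ^ 2))) hu
      (by fun_prop) fun x (hx : 0 < x) => ?_
    have hlip := hD.abs_sub_le_mul_abs_sub hx.le hc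
    rw [abs_sub_comm x c] at hlip
    calc |2 * (c - x) * (d x - d c)| = 2 * |c - x| * |d x - d c| := by
          rw [abs_mul, abs_mul, abs_two]
      _ ≤ 2 * |c - x| * (β * |c - x|) := by gcongr
      _ = 2 * β * (c - x) ^ 2 := by rw [← sq_abs (c - x)]; ring
      _ ≤ 2 * β * (2 * (1 + c ^ 2) * (1 + x ^ 2)) := by
          gcongr
          · linarith [hD.beta_pos]
          · exact hsq x
      _ = 2 * β * (2 * (1 + c ^ 2)) * (1 + x ^ 2) := by ring
  rw [← integral_const_mul]
  refine setIntegral_mono_on hint (hint_sq.const_mul _) measurableSet_Ioi fun x (hx : 0 < x) => ?_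
  have := hD.mul_sq_le_sub_mul_sub hc hx.le
  nlinarith [hu_nonneg x hx, mul_le_mul_of_nonneg_right this (hu_nonneg x hx)]

theorem le_mul_exp_of_hasDerivWithinAt_le {f f' : ℝ → ℝ} {K : ℝ}
    (hf : ∀ t ∈ Ici (0:ℝ), HasDerivWithinAt f (f' t) (Ici 0) t)
    (bound : ∀ t ∈ Ici (0:ℝ), f' t ≤ K * f t) {t : ℝ} (ht : 0 ≤ t) :
    f t ≤ f 0 * Real.exp (K * t) := by
  have h := le_gronwallBound_of_liminf_deriv_right_le (ε := 0) (b := t)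
    (fun s hs => (hf s hs.1).continuousWithinAt.mono Icc_subset_Ici_self)
    (fun s hs _ hr => ((hf s hs.1).mono (Ici_subset_Ici.2 hs.1)).liminf_right_slope_le hr)
    le_rfl (fun s hs => by simpa using bound s hs.1) t ⟨ht, le_rfl⟩
  simpa [gronwallBound_ε0] using h

namespace WeakSolLSN

variable {d : ℝ → ℝ} {M : ℝ} {i0 : ℕ} {V : ℝ → ℝ} {u : ℝ → ℝ → ℝ}

theorem hasDerivWithinAt_integral (hsol : WeakSolLSN d M 0 i0 V u) {φ φ' : ℝ → ℝ}
    (hφ : IsTest φ φ') {t : ℝ} (ht : t ∈ Ici (0:ℝ)) :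
    HasDerivWithinAt (fun s => ∫ x in Ioi (0:ℝ), φ x * u s x)
      (∫ x in Ioi (0:ℝ), φ' x * (V t - d x) * u t x) (Ici 0) t := by
  simpa using hsol.weak φ φ' hφ t ht

theorem integrableOn_deriv_mul {d' : ℝ → ℝ} {α β : ℝ} (hD : DPlus d d' α β)
    (hsol : WeakSolLSN d M 0 i0 V u) {φ φ' : ℝ → ℝ} (hφ : IsTest φ φ') {t : ℝ}
    (ht : t ∈ Ici (0:ℝ)) :
    IntegrableOn (fun x => φ' x * (V t - d x) * u t x) (Ioi 0) := by
  obtain ⟨-, hφ'_cont, C, hC⟩ := hφ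
  have hdC : ContinuousOn d (Ioi 0) := hD.continuousOn.mono Ioi_subset_Ici_self
  refine integrableOn_mul_of_abs_le (C := 2 * C * (|V t - d 0| + β)) (hsol.u_int t ht)
    ((hφ'_cont.mono Ioi_subset_Ici_self).mul (continuousOn_const.sub hdC)) fun x (hx : 0 < x) => ?_
  have hφ' := (hC x hx.le).2
  have hV := hD.abs_sub_le (V t) hx.le
  rw [abs_mul]
  have hC0 : 0 ≤ C := by nlinarith [abs_nonneg (φ' x)]
  have hA : 0 ≤ |V t - d 0| + β := by nlinarith [abs_nonneg (V t - d x)]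
  calc |φ' x| * |V t - d x| ≤ C * (1 + x) * ((|V t - d 0| + β) * (1 + x)) :=
        mul_le_mul hφ' hV (abs_nonneg _) (by positivity)
    _ ≤ 2 * C * (|V t - d 0| + β) * (1 + x ^ 2) := by
        nlinarith [mul_nonneg (mul_nonneg hC0 hA) (sq_nonneg (x - 1))]

theorem hasDerivWithinAt_integral_sq_sub {d' : ℝ → ℝ} {α β : ℝ} (hD : DPlus d d' α β)
    (hsol : WeakSolLSN d M 0 i0 V u) {X : ℝ → ℝ} {t : ℝ} (ht : t ∈ Ici (0:ℝ))
    (hX : HasDerivWithinAt X (V t - d (X t)) (Ici 0) t) :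
    HasDerivWithinAt (fun s => ∫ x in Ioi (0:ℝ), (X s - x) ^ 2 * u s x)
      (∫ x in Ioi (0:ℝ), 2 * (X t - x) * (d x - d (X t)) * u t x) (Ici 0) t := by
  have hm0 : HasDerivWithinAt (fun s => ∫ x in Ioi (0:ℝ), u s x) 0 (Ici 0) t := by
    simpa using hsol.hasDerivWithinAt_integral isTest_one ht
  have hm1 := hsol.hasDerivWithinAt_integral isTest_id ht
  have hm2 := hsol.hasDerivWithinAt_integral isTest_sq ht
  have hexpand (s : ℝ) (hs : s ∈ Ici (0:ℝ)) := integral_sq_sub_mul (hsol.u_int s hs) (X s)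
  refine ((((hX.pow 2).mul hm0).sub ((hX.const_mul 2).mul hm1)).add hm2).congr hexpand
    (hexpand t ht) |>.congr_deriv ?_
  have i0 : IntegrableOn (u t) (Ioi 0) := by
    simpa using integrableOn_pow_mul (hsol.u_int t ht) (k := 0) (by norm_num)
  have i1 : IntegrableOn (fun x => x * u t x) (Ioi 0) := by
    simpa using integrableOn_pow_mul (hsol.u_int t ht) (k := 1) (by norm_num)
  have iV := hsol.integrableOn_deriv_mul hD isTest_id ht
  have iV2 := hsol.integrableOn_deriv_mul hD isTest_sq ht
  set c := X t
  set w := V t - d c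
  calc (2:ℕ) * c ^ (2 - 1) * w * (∫ x in Ioi (0:ℝ), u t x) + c ^ 2 * 0
        - (2 * w * (∫ x in Ioi (0:ℝ), x * u t x)
          + 2 * c * ∫ x in Ioi (0:ℝ), 1 * (V t - d x) * u t x)
        + (∫ x in Ioi (0:ℝ), 2 * x * (V t - d x) * u t x)
      = ∫ x in Ioi (0:ℝ), (2 * c * w * u t x - 2 * w * (x * u t x)
          - 2 * c * (1 * (V t - d x) * u t x) + 2 * x * (V t - d x) * u t x) := by
        have i01 := Integrable.sub' (i0.const_mul (2 * c * w)) (i1.const_mul (2 * w))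
        rw [integral_add (i01.sub' (iV.const_mul _)) iV2, integral_sub i01 (iV.const_mul _),
          integral_sub (i0.const_mul _) (i1.const_mul _), integral_const_mul, integral_const_mul,
          integral_const_mul]
        push_cast
        ring
    _ = ∫ x in Ioi (0:ℝ), 2 * (c - x) * (d x - d c) * u t x := by
        congr 1; funext x; ring

end WeakSolLSN

theorem LS_entropy_characteristics_general
    (d d' : ℝ → ℝ) (α β : ℝ) (hD : DPlus d d' α β)
    (M : ℝ) (i0 : ℕ)
    (V : ℝ → ℝ) (u : ℝ → ℝ → ℝ)
    (hsol : WeakSolLSN d M 0 i0 V u)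
    (z : ℝ)
    (X : ℝ → ℝ) (hX0 : X 0 = z)
    (hXpos : ∀ t ∈ Ici (0:ℝ), 0 ≤ X t)
    (hXode : ∀ t ∈ Ici (0:ℝ), HasDerivWithinAt X (V t - d (X t)) (Ici 0) t) :
    ∀ t ∈ Ici (0:ℝ),
      (∫ x in Ioi (0:ℝ), (X t - x) ^ 2 * u t x) ≤
        (∫ x in Ioi (0:ℝ), (z - x) ^ 2 * u 0 x) * Real.exp (-2 * α * t) := by
  intro t ht
  have hdecay := le_mul_exp_of_hasDerivWithinAt_le
    (fun s hs => hsol.hasDerivWithinAt_integral_sq_sub hD hs (hXode s hs))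
    (fun s hs => hD.integral_mul_sub_le_neg_mul_integral_sq
      (fun x hx => hsol.u_nonneg s hs x (mem_Ici.2 hx.le)) (hsol.u_int s hs) (hXpos s hs)) ht
  rwa [hX0] at hdecay

/-- Lemma 2.2, entropy inequality / concentration along characteristics:
under (D+), for a weak solution of the Lifshitz–Slyozov system (ε = 0) with total mass `M`
and `V₀ > d(0)`, and for the characteristic `X(·,z)` through any `z ≥ 0`,
the functional `g(t,z) = ∫₀^∞ (X(t,z)−x)² u(t,x) dx` satisfies
`g(t,z) ≤ g(0,z) e^{−2αt}` for all `t ≥ 0`. -/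
theorem LS_entropy_characteristics
    (d d' : ℝ → ℝ) (α β : ℝ) (hD : DPlus d d' α β)
    (M : ℝ) (hM : 0 < M) (i0 : ℕ)
    (V : ℝ → ℝ) (u : ℝ → ℝ → ℝ)
    (hsol : WeakSolLSN d M 0 i0 V u)
    (hV0 : d 0 < V 0)
    (z : ℝ) (hz : 0 ≤ z)
    (X : ℝ → ℝ) (hX0 : X 0 = z)
    (hXpos : ∀ t ∈ Ici (0:ℝ), 0 ≤ X t)
    (hXode : ∀ t ∈ Ici (0:ℝ), HasDerivWithinAt X (V t - d (X t)) (Ici 0) t) :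
    ∀ t ∈ Ici (0:ℝ),
      (∫ x in Ioi (0:ℝ), (X t - x) ^ 2 * u t x) ≤
        (∫ x in Ioi (0:ℝ), (z - x) ^ 2 * u 0 x) * Real.exp (-2 * α * t) :=
  LS_entropy_characteristics_general d d' α β hD M i0 V u hsol z X hX0 hXpos hXode
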